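/- Let A, B, T, c_T be as above with observability constant c_T, let α be the operator norm of the map y⁰ ↦ y ∈ L²((0,T),ℝⁿ) (y solving −y′ = A*y, y(0) = y⁰), and let g ∈ L²((0,T),ℝⁿ). If ỹ minimizes J(y⁰) = ½∫₀^T |B*ỹ|² + ∫₀^T ⟨ỹ, g⟩, then the control v := B*ỹ satisfies ‖v‖_{L²} ≤ (α/√c_T) ‖g‖_{L²}. In the case g = 0 replaced by the affine functional J₀(y⁰) = ½∫₀^T |B*ỹ|² + ⟨x⁰, y⁰⟩, the minimizer yields ‖v‖_{L²} ≤ |x⁰|/√c_T. -/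

import Mathlib

inductive PTree : Type
  | node : List PTree → PTree

namespace PTree

instance : Inhabited PTree := ⟨node []⟩

/-- the single-leaf tree ∘ -/
def leaf : PTree := node []

/-- number of leaves ‖b‖ -/
def leaves : PTree → ℕ
  | node ts => if ts.isEmpty then 1 else (ts.attach.map fun t => leaves t.1).sum
decreasing_by simp only [PTree.node.sizeOf_spec]; have := List.sizeOf_lt_of_mem t.2; omega


/-- number of internal vertices |b| -/
def internals : PTree → ℕ
  | node ts => if ts.isEmpty then 0 else 1 + (ts.attach.map fun t => internals t.1).sum
decreasing_by simp only [PTree.node.sizeOf_spec]; have := List.sizeOf_lt_of_mem t.2; omega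


/-- total number of vertices N(b) -/
def Ntot (b : PTree) : ℕ := b.leaves + b.internals

/-- non-degenerate: every internal vertex has at least two children -/
def ND : PTree → Prop
  | node ts => ts.isEmpty ∨ (2 ≤ ts.length ∧ ∀ t ∈ ts.attach, ND t.1)
decreasing_by simp only [PTree.node.sizeOf_spec]; have := List.sizeOf_lt_of_mem t.2; omega


/-- the list of numbers of children of the internal vertices of b -/
def childCounts : PTree → List ℕ
  | node ts => if ts.isEmpty then [] else ts.length :: (ts.attach.map fun t => childCounts t.1).flatten
decreasing_by simp only [PTree.node.sizeOf_spec]; have := List.sizeOf_lt_of_mem t.2; omega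


mutual
/-- graft trees from the list E onto the successive leaves of b (left to right);
returns the grafted tree together with the unused suffix of E. -/
def graft : PTree → List PTree → PTree × List PTree
  | node ts, E =>
    if ts.isEmpty then (E.headI, E.tail)
    else
      let p := graftL ts E
      (node p.1, p.2)
/-- graft trees from the list E onto the leaves of the forest l -/
def graftL : List PTree → List PTree → List PTree × List PTree
  | [], E => ([], E)
  | t :: ts, E =>
    let p := graft t E
    let q := graftL ts p.2
    (p.1 :: q.1, q.2)
end

/-- E ∝ b : graft the tuple E onto the leaves of b -/
def graftT (b : PTree) (E : List PTree) : PTree := (b.graft E).1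

mutual
/-- the list of all decompositions b = E ∝ c, as pairs (c, E) -/
def decomps : PTree → List (PTree × List PTree)
  | node ts =>
    (leaf, [node ts]) ::
      (if ts.isEmpty then []
       else (decompsL ts).map fun p => (node p.1, p.2))
/-- decompositions of a forest: pairs (list of bases, concatenated grafted tuples) -/
def decompsL : List PTree → List (List PTree × List PTree)
  | [] => [([], [])]
  | t :: ts =>
    (decomps t).flatMap fun p => (decompsL ts).map fun q => (p.1 :: q.1, p.2 ++ q.2)
end

theorem leaves_pos : ∀ b : PTree, 0 < b.leaves
  | node ts => by
    show 0 < leaves (node ts)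
    unfold leaves
    split
    · exact one_pos
    · rename_i h
      have hne : ts ≠ [] := by simpa [List.isEmpty_iff] using h
      obtain ⟨t, ts', rfl⟩ := List.exists_cons_of_ne_nil hne
      have := leaves_pos t
      simp only [List.attach_cons, List.map_cons, List.sum_cons]
      positivity

end PTree

open TensorProduct

/-- non-degenerate planar trees -/
def NDTree := {b : PTree // b.ND}

/-- the tensor algebra ℱ over the span 𝒜 of non-degenerate planar trees -/
abbrev TA := TensorAlgebra ℝ (NDTree →₀ ℝ)

open scoped Classical in
/-- a non-degenerate planar tree seen as an element of ℱ -/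
noncomputable def iotaT (t : PTree) : TA :=
  if h : t.ND then TensorAlgebra.ι ℝ (Finsupp.single (⟨t, h⟩ : NDTree) (1 : ℝ)) else 0

/-- the coproduct ϖ : ℱ → ℱ ⊗ ℱ, ϖ(b) = Σ_{E ∝ c = b} (E₁ • ⋯ • E_k) ⊗ c -/
noncomputable def cop : TA →ₐ[ℝ] TA ⊗[ℝ] TA :=
  TensorAlgebra.lift ℝ
    ((Finsupp.lift (TA ⊗[ℝ] TA) ℝ NDTree) fun b =>
      ((PTree.decomps b.1).map fun p => ((p.2.map iotaT).prod) ⊗ₜ[ℝ] iotaT p.1).sum)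

/-- B₋ : sends ∘ to 0 and B₊(b₁,…,b_m) to b₁ • ⋯ • b_m -/
noncomputable def Bminus : PTree → TA
  | PTree.node ts => if ts.isEmpty then 0 else (ts.map iotaT).prod

/-- isomorphism of rooted trees (forgetting the planar order) -/
def RIso : PTree → PTree → Prop
  | .node ts, .node ss =>
    ∃ e : Fin ts.length ≃ Fin ss.length, ∀ i : Fin ts.length, RIso (ts.get i) (ss.get (e i))
termination_by b _ => sizeOf b
decreasing_by
  simp only [PTree.node.sizeOf_spec]
  have h : sizeOf (ts.get i) < sizeOf ts :=
    List.sizeOf_lt_of_mem (by exact ts.get_mem i)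
  omega

open Matrix in
/-- the solution of −y′ = A*y with y(0) = y⁰ -/
noncomputable def adjSol {n : ℕ} (A : Matrix (Fin n) (Fin n) ℝ) (y0 : Fin n → ℝ) (t : ℝ) :
    Fin n → ℝ := (NormedSpace.exp ((-t) • Aᵀ)) *ᵥ y0


open Matrix MeasureTheory Filter

/-- J(y⁰) = ½ ∫₀ᵀ |B*ỹ(t)|² dt + ∫₀ᵀ ⟨ỹ(t), g(t)⟩ dt -/
noncomputable def Jg {n m : ℕ} (A : Matrix (Fin n) (Fin n) ℝ)
    (B : Matrix (Fin n) (Fin m) ℝ) (T : ℝ) (g : ℝ → Fin n → ℝ) (y0 : Fin n → ℝ) : ℝ :=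
  (1 / 2) * (∫ t in (0:ℝ)..T, ∑ j, ((Bᵀ *ᵥ adjSol A y0 t) j) ^ 2)
    + ∫ t in (0:ℝ)..T, ∑ i, adjSol A y0 t i * g t i

/-- J₀(y⁰) = ½ ∫₀ᵀ |B*ỹ(t)|² dt + ⟨x⁰, y⁰⟩ -/
noncomputable def Jzero {n m : ℕ} (A : Matrix (Fin n) (Fin n) ℝ)
    (B : Matrix (Fin n) (Fin m) ℝ) (T : ℝ) (x0 : Fin n → ℝ) (y0 : Fin n → ℝ) : ℝ :=
  (1 / 2) * (∫ t in (0:ℝ)..T, ∑ j, ((Bᵀ *ᵥ adjSol A y0 t) j) ^ 2) + ∑ i, x0 i * y0 i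

lemma aux_quad {Q L : ℝ} (hQ : 0 ≤ Q) (h : ∀ s : ℝ, Q/2 + L ≤ s^2*Q/2 + s*L) : Q = -L := by
  have hq1 : (0:ℝ) < Q + 1 := by linarith
  set d : ℝ := (Q+L)/(Q+1) with hd_def
  have hd : d * (Q+1) = Q+L := div_mul_cancel₀ _ (ne_of_gt hq1)
  have h' := h (1 - d)
  have hsq : (Q+L)^2 ≤ 0 := by nlinarith [h', hd, sq_nonneg d, mul_pos hq1 hq1]
  have : Q + L = 0 := by nlinarith [sq_nonneg (Q+L)]
  linarith

lemma aux_fincs {ι : Type*} (s : Finset ι) (f g : ι → ℝ) :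
    ∑ i ∈ s, f i * g i ≤ Real.sqrt (∑ i ∈ s, f i ^ 2) * Real.sqrt (∑ i ∈ s, g i ^ 2) := by
  have h := Finset.sum_mul_sq_le_sq_mul_sq s f g
  calc ∑ i ∈ s, f i * g i ≤ |∑ i ∈ s, f i * g i| := le_abs_self _
    _ = Real.sqrt ((∑ i ∈ s, f i * g i)^2) := (Real.sqrt_sq_eq_abs _).symm
    _ ≤ Real.sqrt ((∑ i ∈ s, f i ^ 2) * ∑ i ∈ s, g i ^ 2) := Real.sqrt_le_sqrt h
    _ = _ := Real.sqrt_mul (Finset.sum_nonneg fun i _ => sq_nonneg _) _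

lemma aux_int_mul {X : Type*} [MeasurableSpace X] {μ : Measure X} {f g : X → ℝ}
    (hf : MemLp f 2 μ) (hg : MemLp g 2 μ) : Integrable (fun x => f x * g x) μ := by
  have h := L2.integrable_inner (𝕜 := ℝ) (hf.toLp f) (hg.toLp g)
  refine h.congr ?_
  filter_upwards [hf.coeFn_toLp, hg.coeFn_toLp] with x h1 h2
  simp [RCLike.inner_apply, h1, h2, mul_comm]

lemma aux_l2cs {X : Type*} [MeasurableSpace X] {μ : Measure X} {f g : X → ℝ}
    (hf : MemLp f 2 μ) (hg : MemLp g 2 μ) :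
    ∫ x, f x * g x ∂μ ≤ Real.sqrt (∫ x, f x ^ 2 ∂μ) * Real.sqrt (∫ x, g x ^ 2 ∂μ) := by
  set F := hf.toLp f with hF
  set G := hg.toLp g with hG
  have h1 : ∫ x, f x * g x ∂μ = (inner ℝ F G : ℝ) := by
    rw [L2.inner_def]
    refine integral_congr_ae ?_
    filter_upwards [hf.coeFn_toLp, hg.coeFn_toLp] with x h1 h2
    simp [RCLike.inner_apply, hF, hG, h1, h2, mul_comm]
  have h2 : ∫ x, f x ^ 2 ∂μ = ‖F‖^2 := by
    rw [← real_inner_self_eq_norm_sq, L2.inner_def]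
    refine (integral_congr_ae ?_).symm
    filter_upwards [hf.coeFn_toLp] with x h1
    simp [RCLike.inner_apply, hF, h1, sq]
  have h3 : ∫ x, g x ^ 2 ∂μ = ‖G‖^2 := by
    rw [← real_inner_self_eq_norm_sq, L2.inner_def]
    refine (integral_congr_ae ?_).symm
    filter_upwards [hg.coeFn_toLp] with x h1
    simp [RCLike.inner_apply, hG, h1, sq]
  rw [h1, h2, h3, Real.sqrt_sq (norm_nonneg _), Real.sqrt_sq (norm_nonneg _)]
  exact real_inner_le_norm F G

lemma aux_final {Q C : ℝ} (hQ : 0 ≤ Q) (hC : 0 ≤ C) (h : Q ≤ C * Real.sqrt Q) :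
    Real.sqrt Q ≤ C := by
  rcases eq_or_lt_of_le (Real.sqrt_nonneg Q) with h0 | h0
  · rw [← h0]; exact hC
  · have hQ' : Real.sqrt Q * Real.sqrt Q = Q := Real.mul_self_sqrt hQ
    have : Real.sqrt Q * Real.sqrt Q ≤ C * Real.sqrt Q := by rw [hQ']; exact h
    exact le_of_mul_le_mul_right this h0

lemma aux_cont {n : ℕ} (A : Matrix (Fin n) (Fin n) ℝ) (y0 : Fin n → ℝ) (i : Fin n) :
    Continuous fun t : ℝ => adjSol A y0 t i := by
  letI : NormedRing (Matrix (Fin n) (Fin n) ℝ) := Matrix.linftyOpNormedRing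
  letI : NormedAlgebra ℝ (Matrix (Fin n) (Fin n) ℝ) := Matrix.linftyOpNormedAlgebra
  let +nondep : NormedAlgebra ℚ (Matrix (Fin n) (Fin n) ℝ) := .restrictScalars ℚ ℝ _
  have h1 : Continuous fun t : ℝ => (-t) • Aᵀ := by continuity
  have h2 := (NormedSpace.exp_continuous
    (𝔸 := Matrix (Fin n) (Fin n) ℝ)).comp h1
  have hc : ∀ j, Continuous fun t : ℝ => (NormedSpace.exp ((-t) • Aᵀ)) i j := fun j =>
    (continuous_apply j).comp ((continuous_apply i).comp h2)
  have he : (fun t : ℝ => adjSol A y0 t i)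
      = fun t : ℝ => ∑ j, (NormedSpace.exp ((-t) • Aᵀ)) i j * y0 j := by
    funext t; simp [adjSol, Matrix.mulVec, dotProduct]
  rw [he]
  exact continuous_finset_sum _ fun j _ => (hc j).mul continuous_const

lemma aux_memlp {n : ℕ} (A : Matrix (Fin n) (Fin n) ℝ) (y0 : Fin n → ℝ) (T : ℝ) (i : Fin n) :
    MemLp (fun t => adjSol A y0 t i) 2 (volume.restrict (Set.Ioc 0 T)) := by
  have hc := aux_cont A y0 i
  rw [memLp_two_iff_integrable_sq hc.aestronglyMeasurable.restrict]
  have h1 : IntegrableOn (fun t => (adjSol A y0 t i) ^ 2) (Set.Icc 0 T) :=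
    (hc.pow 2).continuousOn.integrableOn_Icc
  exact h1.mono_set Set.Ioc_subset_Icc_self


/-- the control v = B*ỹ coming from a minimizer of J satisfies
‖v‖_{L²} ≤ (α/√c_T)‖g‖_{L²}, and for the affine functional J₀,
‖v‖_{L²} ≤ |x⁰|/√c_T. -/
theorem control_norm_bounds (n m : ℕ) (A : Matrix (Fin n) (Fin n) ℝ)
    (B : Matrix (Fin n) (Fin m) ℝ) (T cT α : ℝ) (hT : 0 < T) (hcT : 0 < cT)
    (hα : 0 ≤ α)
    (hobs : ∀ y0 : Fin n → ℝ,
      cT * ∑ i, y0 i ^ 2 ≤ ∫ t in (0:ℝ)..T, ∑ j, ((Bᵀ *ᵥ adjSol A y0 t) j) ^ 2)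
    (hαbound : ∀ y0 : Fin n → ℝ,
      (∫ t in (0:ℝ)..T, ∑ i, (adjSol A y0 t i) ^ 2) ≤ α ^ 2 * ∑ i, y0 i ^ 2) :
    (∀ (g : ℝ → Fin n → ℝ), MemLp g 2 (volume.restrict (Set.Ioc 0 T)) →
      ∀ y0m : Fin n → ℝ, (∀ y0, Jg A B T g y0m ≤ Jg A B T g y0) →
        Real.sqrt (∫ t in (0:ℝ)..T, ∑ j, ((Bᵀ *ᵥ adjSol A y0m t) j) ^ 2) ≤
          (α / Real.sqrt cT) * Real.sqrt (∫ t in (0:ℝ)..T, ∑ i, (g t i) ^ 2)) ∧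
    (∀ (x0 : Fin n → ℝ) (y0m : Fin n → ℝ),
      (∀ y0, Jzero A B T x0 y0m ≤ Jzero A B T x0 y0) →
        Real.sqrt (∫ t in (0:ℝ)..T, ∑ j, ((Bᵀ *ᵥ adjSol A y0m t) j) ^ 2) ≤
          Real.sqrt (∑ i, x0 i ^ 2) / Real.sqrt cT) := by
  have hy : ∀ (y0 : Fin n → ℝ) (i : Fin n),
      MemLp (fun t => adjSol A y0 t i) 2 (volume.restrict (Set.Ioc 0 T)) :=
    fun y0 i => aux_memlp A y0 T i
  have hscale : ∀ (s : ℝ) (y0 : Fin n → ℝ) (t : ℝ), adjSol A (s • y0) t = s • adjSol A y0 t := by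
    intro s y0 t; unfold adjSol; rw [Matrix.mulVec_smul]
  have hQs : ∀ (y0 : Fin n → ℝ) (s : ℝ),
      (∫ t in (0:ℝ)..T, ∑ j, ((Bᵀ *ᵥ adjSol A (s • y0) t) j) ^ 2)
        = s^2 * ∫ t in (0:ℝ)..T, ∑ j, ((Bᵀ *ᵥ adjSol A y0 t) j) ^ 2 := by
    intro y0 s
    have h : ∀ t, (∑ j, ((Bᵀ *ᵥ adjSol A (s • y0) t) j) ^ 2)
        = s^2 * ∑ j, ((Bᵀ *ᵥ adjSol A y0 t) j) ^ 2 := by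
      intro t; rw [hscale, Matrix.mulVec_smul]
      simp [mul_pow, Finset.mul_sum]
    simp_rw [h, intervalIntegral.integral_const_mul]
  have hQnn : ∀ y0 : Fin n → ℝ,
      0 ≤ ∫ t in (0:ℝ)..T, ∑ j, ((Bᵀ *ᵥ adjSol A y0 t) j) ^ 2 :=
    fun y0 => intervalIntegral.integral_nonneg hT.le
      fun t _ => Finset.sum_nonneg fun j _ => sq_nonneg _
  -- bound on √(∑ y0m²)
  have hSb : ∀ y0m : Fin n → ℝ, Real.sqrt (∑ i, y0m i ^ 2) ≤
      Real.sqrt (∫ t in (0:ℝ)..T, ∑ j, ((Bᵀ *ᵥ adjSol A y0m t) j) ^ 2) / Real.sqrt cT := by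
    intro y0m
    have h1 : ∑ i, y0m i ^ 2 ≤
        (∫ t in (0:ℝ)..T, ∑ j, ((Bᵀ *ᵥ adjSol A y0m t) j) ^ 2) / cT := by
      rw [le_div_iff₀ hcT]; linarith [hobs y0m]
    calc Real.sqrt (∑ i, y0m i ^ 2) ≤
        Real.sqrt ((∫ t in (0:ℝ)..T, ∑ j, ((Bᵀ *ᵥ adjSol A y0m t) j) ^ 2) / cT) :=
          Real.sqrt_le_sqrt h1
      _ = _ := Real.sqrt_div (hQnn y0m) cT
  constructor
  · -- case Jg
    intro g hgmem y0m hmin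
    have hgc : ∀ i, MemLp (fun t => g t i) 2 (volume.restrict (Set.Ioc 0 T)) := fun i =>
      (ContinuousLinearMap.proj (R := ℝ) (φ := fun _ : Fin n => ℝ) i).comp_memLp' hgmem
    set Q := ∫ t in (0:ℝ)..T, ∑ j, ((Bᵀ *ᵥ adjSol A y0m t) j) ^ 2 with hQdef
    set L := ∫ t in (0:ℝ)..T, ∑ i, adjSol A y0m t i * g t i with hLdef
    have hQ0 : 0 ≤ Q := by rw [hQdef]; exact hQnn y0m
    have hLs : ∀ s : ℝ,
        (∫ t in (0:ℝ)..T, ∑ i, adjSol A (s • y0m) t i * g t i) = s * L := by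
      intro s
      have h : ∀ t, (∑ i, adjSol A (s • y0m) t i * g t i)
          = s * ∑ i, adjSol A y0m t i * g t i := by
        intro t; rw [hscale]; simp [Finset.mul_sum, mul_assoc]
      simp_rw [h, intervalIntegral.integral_const_mul]
      rfl
    have hquad : ∀ s : ℝ, Q/2 + L ≤ s^2*Q/2 + s*L := by
      intro s
      have h := hmin (s • y0m)
      have e1 : Jg A B T g y0m = Q/2 + L := by unfold Jg; rw [← hQdef, ← hLdef]; ring
      have e2 : Jg A B T g (s • y0m) = s^2*Q/2 + s*L := by
        unfold Jg; rw [hQs y0m s, hLs s, ← hQdef]; ring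
      rw [e1, e2] at h; exact h
    have hEq : Q = -L := aux_quad hQ0 hquad
    -- Cauchy-Schwarz bound on -L
    have ha : ∀ i : Fin n, 0 ≤ ∫ t in Set.Ioc (0:ℝ) T, (adjSol A y0m t i)^2 :=
      fun i => integral_nonneg fun t => sq_nonneg _
    have hb : ∀ i : Fin n, 0 ≤ ∫ t in Set.Ioc (0:ℝ) T, (g t i)^2 :=
      fun i => integral_nonneg fun t => sq_nonneg _
    have hstep1 : -L = ∑ i, ∫ t in Set.Ioc (0:ℝ) T, (-(adjSol A y0m t i)) * g t i := by
      calc -L = ∫ t in Set.Ioc (0:ℝ) T, ∑ i, (-(adjSol A y0m t i)) * g t i := by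
            rw [hLdef, intervalIntegral.integral_of_le hT.le, ← integral_neg]
            congr 1; funext t
            rw [← Finset.sum_neg_distrib]
            exact Finset.sum_congr rfl fun i _ => (neg_mul _ _).symm
        _ = _ := integral_finset_sum _ fun i _ => aux_int_mul ((hy y0m i).neg) (hgc i)
    have hstep2 : ∀ i : Fin n,
        (∫ t in Set.Ioc (0:ℝ) T, (-(adjSol A y0m t i)) * g t i) ≤
          Real.sqrt (∫ t in Set.Ioc (0:ℝ) T, (adjSol A y0m t i)^2) *
            Real.sqrt (∫ t in Set.Ioc (0:ℝ) T, (g t i)^2) := by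
      intro i
      have h := aux_l2cs ((hy y0m i).neg) (hgc i)
      simpa [Pi.neg_apply, neg_sq] using h
    have hstep3 :
        (∑ i, Real.sqrt (∫ t in Set.Ioc (0:ℝ) T, (adjSol A y0m t i)^2) *
            Real.sqrt (∫ t in Set.Ioc (0:ℝ) T, (g t i)^2)) ≤
          Real.sqrt (∑ i, ∫ t in Set.Ioc (0:ℝ) T, (adjSol A y0m t i)^2) *
            Real.sqrt (∑ i, ∫ t in Set.Ioc (0:ℝ) T, (g t i)^2) := by
      have h := aux_fincs Finset.univ
        (fun i => Real.sqrt (∫ t in Set.Ioc (0:ℝ) T, (adjSol A y0m t i)^2))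
        (fun i => Real.sqrt (∫ t in Set.Ioc (0:ℝ) T, (g t i)^2))
      have e1 : ∑ i : Fin n, (Real.sqrt (∫ t in Set.Ioc (0:ℝ) T, (adjSol A y0m t i)^2))^2
          = ∑ i : Fin n, ∫ t in Set.Ioc (0:ℝ) T, (adjSol A y0m t i)^2 :=
        Finset.sum_congr rfl fun i _ => Real.sq_sqrt (ha i)
      have e2 : ∑ i : Fin n, (Real.sqrt (∫ t in Set.Ioc (0:ℝ) T, (g t i)^2))^2
          = ∑ i : Fin n, ∫ t in Set.Ioc (0:ℝ) T, (g t i)^2 :=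
        Finset.sum_congr rfl fun i _ => Real.sq_sqrt (hb i)
      rw [e1, e2] at h
      exact h
    have hsumy : ∑ i : Fin n, ∫ t in Set.Ioc (0:ℝ) T, (adjSol A y0m t i)^2
        = ∫ t in (0:ℝ)..T, ∑ i, (adjSol A y0m t i)^2 := by
      rw [intervalIntegral.integral_of_le hT.le,
        integral_finset_sum _ fun i _ => (hy y0m i).integrable_sq]
    have hsumg : ∑ i : Fin n, ∫ t in Set.Ioc (0:ℝ) T, (g t i)^2
        = ∫ t in (0:ℝ)..T, ∑ i, (g t i)^2 := by
      rw [intervalIntegral.integral_of_le hT.le,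
        integral_finset_sum _ fun i _ => (hgc i).integrable_sq]
    have hGnn : 0 ≤ ∫ t in (0:ℝ)..T, ∑ i, (g t i)^2 :=
      intervalIntegral.integral_nonneg hT.le fun t _ => Finset.sum_nonneg fun i _ => sq_nonneg _
    -- chain
    have h4 : Real.sqrt (∫ t in (0:ℝ)..T, ∑ i, (adjSol A y0m t i)^2) ≤
        α * (Real.sqrt Q / Real.sqrt cT) := by
      calc Real.sqrt (∫ t in (0:ℝ)..T, ∑ i, (adjSol A y0m t i)^2)
          ≤ Real.sqrt (α^2 * ∑ i, y0m i ^ 2) := Real.sqrt_le_sqrt (hαbound y0m)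
        _ = α * Real.sqrt (∑ i, y0m i ^ 2) := by
            rw [Real.sqrt_mul (sq_nonneg α), Real.sqrt_sq hα]
        _ ≤ α * (Real.sqrt Q / Real.sqrt cT) :=
            mul_le_mul_of_nonneg_left (hSb y0m) hα
    have hfin : Q ≤ ((α / Real.sqrt cT) * Real.sqrt (∫ t in (0:ℝ)..T, ∑ i, (g t i)^2))
        * Real.sqrt Q := by
      calc Q = -L := hEq
        _ = ∑ i, ∫ t in Set.Ioc (0:ℝ) T, (-(adjSol A y0m t i)) * g t i := hstep1
        _ ≤ ∑ i, Real.sqrt (∫ t in Set.Ioc (0:ℝ) T, (adjSol A y0m t i)^2) *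
              Real.sqrt (∫ t in Set.Ioc (0:ℝ) T, (g t i)^2) :=
            Finset.sum_le_sum fun i _ => hstep2 i
        _ ≤ Real.sqrt (∑ i, ∫ t in Set.Ioc (0:ℝ) T, (adjSol A y0m t i)^2) *
              Real.sqrt (∑ i, ∫ t in Set.Ioc (0:ℝ) T, (g t i)^2) := hstep3
        _ = Real.sqrt (∫ t in (0:ℝ)..T, ∑ i, (adjSol A y0m t i)^2) *
              Real.sqrt (∫ t in (0:ℝ)..T, ∑ i, (g t i)^2) := by rw [hsumy, hsumg]
        _ ≤ (α * (Real.sqrt Q / Real.sqrt cT)) *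
              Real.sqrt (∫ t in (0:ℝ)..T, ∑ i, (g t i)^2) :=
            mul_le_mul_of_nonneg_right h4 (Real.sqrt_nonneg _)
        _ = ((α / Real.sqrt cT) * Real.sqrt (∫ t in (0:ℝ)..T, ∑ i, (g t i)^2))
              * Real.sqrt Q := by ring
    exact aux_final hQ0 (by positivity) hfin
  · -- case Jzero
    intro x0 y0m hmin
    set Q := ∫ t in (0:ℝ)..T, ∑ j, ((Bᵀ *ᵥ adjSol A y0m t) j) ^ 2 with hQdef
    set L := ∑ i, x0 i * y0m i with hLdef
    have hQ0 : 0 ≤ Q := by rw [hQdef]; exact hQnn y0m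
    have hquad : ∀ s : ℝ, Q/2 + L ≤ s^2*Q/2 + s*L := by
      intro s
      have h := hmin (s • y0m)
      have e1 : Jzero A B T x0 y0m = Q/2 + L := by unfold Jzero; rw [← hQdef, ← hLdef]; ring
      have e2 : Jzero A B T x0 (s • y0m) = s^2*Q/2 + s*L := by
        unfold Jzero
        rw [hQs y0m s, ← hQdef]
        have h3 : ∑ i, x0 i * (s • y0m) i = s * L := by
          rw [hLdef, Finset.mul_sum]
          exact Finset.sum_congr rfl fun i _ => by simp; ring
        rw [h3]; ring
      rw [e1, e2] at h; exact h
    have hEq : Q = -L := aux_quad hQ0 hquad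
    have hcs : -L ≤ Real.sqrt (∑ i, x0 i ^ 2) * Real.sqrt (∑ i, y0m i ^ 2) := by
      have h := aux_fincs Finset.univ (fun i => -x0 i) y0m
      simpa [hLdef, Finset.sum_neg_distrib, neg_mul] using h
    have hfin : Q ≤ (Real.sqrt (∑ i, x0 i ^ 2) / Real.sqrt cT) * Real.sqrt Q := by
      calc Q = -L := hEq
        _ ≤ Real.sqrt (∑ i, x0 i ^ 2) * Real.sqrt (∑ i, y0m i ^ 2) := hcs
        _ ≤ Real.sqrt (∑ i, x0 i ^ 2) * (Real.sqrt Q / Real.sqrt cT) :=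
            mul_le_mul_of_nonneg_left (hSb y0m) (Real.sqrt_nonneg _)
        _ = (Real.sqrt (∑ i, x0 i ^ 2) / Real.sqrt cT) * Real.sqrt Q := by ring
    exact aux_final hQ0 (by positivity) hfin
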